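/- Let G = (V,E) be a locally finite graph, θ a phase and q : V → ℝ a potential of class K_{0⁺}^θ, and assume (G,q) is (a,k)-sparse for some a, k ≥ 0. Then there are ã ∈ (0,1) and k̃ ≥ 0 such that for all finitely supported f : V → ℂ, (1−ã)(Q_deg(f) + Q_q(f)) − k̃·‖f‖² ≤ Q_θ(f) + Q_q(f) ≤ (1+ã)(Q_deg(f) + Q_q(f)) + k̃·‖f‖². -/

import Mathlib

open scoped BigOperators

noncomputable section

variable {V : Type*} [DecidableEq V] (G : SimpleGraph V) [DecidableRel G.Adj]

/-- The squared `ℓ²`-norm `‖f‖² = ∑_x |f x|²` of a (finitely supported) function. -/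
def qNormSq (f : V → ℂ) : ℝ := ∑' x, ‖f x‖ ^ 2

/-- The quadratic form of the Laplacian:
`Q_Δ(f) = (1/2) ∑_{x ~ y} |f x - f y|²` (sum over ordered pairs of adjacent vertices). -/
def qLap (f : V → ℂ) : ℝ :=
  (1 / 2) * ∑' (x : V), ∑' (y : V), if G.Adj x y then ‖f x - f y‖ ^ 2 else 0

/-- The magnetic quadratic form
`Q_θ(f) = (1/2) ∑_{x ~ y} |f x - e^{iθ(x,y)} f y|²`. -/
def qMag (θ : V → V → ℝ) (f : V → ℂ) : ℝ :=
  (1 / 2) * ∑' (x : V), ∑' (y : V),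
    if G.Adj x y then ‖f x - Complex.exp (Complex.I * (θ x y)) * f y‖ ^ 2 else 0

/-- The quadratic form of a potential: `Q_q(f) = ∑_x q x * |f x|²`. -/
def qPot (q : V → ℝ) (f : V → ℂ) : ℝ := ∑' x, q x * ‖f x‖ ^ 2

variable [G.LocallyFinite]

/-- The quadratic form of the degree: `Q_deg(f) = ∑_x deg x * |f x|²`. -/
def qDeg (f : V → ℂ) : ℝ := ∑' x, (G.degree x : ℝ) * ‖f x‖ ^ 2

/-- Twice the number of undirected edges of the subgraph induced on `W`,
i.e. the number of ordered pairs of adjacent vertices in `W × W`. -/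
def edgesTwice (W : Finset V) : ℕ := ((W ×ˢ W).filter fun p => G.Adj p.1 p.2).card

/-- The cardinality `|∂W|` of the edge boundary of `W`. -/
def bdryCard (W : Finset V) : ℕ :=
  ∑ x ∈ W, ((G.neighborFinset x).filter fun y => y ∉ W).card

/-- `(G, q)` is `(a,k)`-sparse: `2|E_W| ≤ k|W| + a(|∂W| + q₊(W))` for all finite `W`. -/
def IsSparse (q : V → ℝ) (a k : ℝ) : Prop :=
  ∀ W : Finset V,
    (edgesTwice G W : ℝ) ≤ k * W.card + a * ((bdryCard G W : ℝ) + ∑ x ∈ W, max (q x) 0)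

/-- The potential `q` belongs to the class `K_α`:
`Q_{q₋}(f) ≤ α (Q_Δ(f) + Q_{q₊}(f)) + C ‖f‖²` for all finitely supported `f`. -/
def KClass (q : V → ℝ) (α : ℝ) : Prop :=
  ∃ C : ℝ, 0 ≤ C ∧ ∀ f : V → ℂ, (Function.support f).Finite →
    qPot (fun x => max (-q x) 0) f ≤
      α * (qLap G f + qPot (fun x => max (q x) 0) f) + C * qNormSq f

/-- The potential `q` belongs to the magnetic class `K_α^θ`:
`Q_{q₋}(f) ≤ α (Q_θ(f) + Q_{q₊}(f)) + C ‖f‖²` for all finitely supported `f`. -/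
def KClassTheta (θ : V → V → ℝ) (q : V → ℝ) (α : ℝ) : Prop :=
  ∃ C : ℝ, 0 ≤ C ∧ ∀ f : V → ℂ, (Function.support f).Finite →
    qPot (fun x => max (-q x) 0) f ≤
      α * (qMag G θ f + qPot (fun x => max (q x) 0) f) + C * qNormSq f

/-- The Cheeger (isoperimetric) constant of `U ⊆ V`:
the infimum over nonempty finite `W ⊆ U` of `(|∂W| + q(W)) / (deg(W) + q(W))`,
with the convention that the quotient is `0` when the denominator vanishes. -/
def cheeger (q : V → ℝ) (U : Set V) : ℝ :=
  ⨅ W : {W : Finset V // ↑W ⊆ U ∧ W.Nonempty},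
    if (∑ x ∈ W.1, ((G.degree x : ℝ) + q x)) = 0 then 0
    else ((bdryCard G W.1 : ℝ) + ∑ x ∈ W.1, q x) / ∑ x ∈ W.1, ((G.degree x : ℝ) + q x)

/-- The Cheeger constant at infinity: `α_∞ = sup over finite K of α_{V∖K}`. -/
def cheegerInfty (q : V → ℝ) : ℝ :=
  ⨆ K : Finset V, cheeger G q ((↑K : Set V)ᶜ)

/-!
Write `D, T, L, P, N` for `Q_deg(f)`, `Q_θ(f)`, `Q_Δ(|f|)`, `Q_{q₊}(f)`, `Q_{q₋}(f)`. Pointwise,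
`(|u| - |v|)² ≤ |u - e^{iθ} v|² ≤ 2|u|² + 2|v|² - (|u| - |v|)²`, so `L ≤ T ≤ 2D - L`.
Sparseness applied to the level sets of `|f|²` (a discrete co-area formula) gives
`D ≤ k ∑|f|² + (a+1) ∑_{x~y} ||f x|² - |f y|²| / 2 + a P`, hence `D ≤ 2k‖f‖² + 2(a+1)²(L + P)`.
Finally `q ∈ K_ε^θ` gives `N ≤ ε(T + P) + C‖f‖²`; for `ε = 1/(6(a+1)² + 2)` these inequalities
combine into the two-sided bound with `ã = 1 - ε`.
-/

open Finset

def adjPairs (S : Finset V) : Finset (V × V) := (S ×ˢ S).filter fun p => G.Adj p.1 p.2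

def SupportNbhdSubset {M : Type*} [Zero M] (f : V → M) (S : Finset V) : Prop :=
  ∀ x, f x ≠ 0 → x ∈ S ∧ ∀ y, G.Adj x y → y ∈ S

lemma norm_exp_I_mul_ofReal (t : ℝ) : ‖Complex.exp (Complex.I * t)‖ = 1 := by
  rw [mul_comm]
  exact Complex.norm_exp_ofReal_mul_I t

lemma sq_norm_sub_norm_le_sq_norm_sub_mul {u v ζ : ℂ} (hζ : ‖ζ‖ = 1) :
    (‖u‖ - ‖v‖) ^ 2 ≤ ‖u - ζ * v‖ ^ 2 := by
  have h := abs_norm_sub_norm_le u (ζ * v)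
  rw [norm_mul, hζ, one_mul] at h
  exact sq_le_sq.mpr (by rwa [abs_norm])

lemma sq_norm_sub_mul_add_le {u v ζ : ℂ} (hζ : ‖ζ‖ = 1) :
    ‖u - ζ * v‖ ^ 2 + (‖u‖ - ‖v‖) ^ 2 ≤ 2 * (‖u‖ ^ 2 + ‖v‖ ^ 2) := by
  have h : ‖u - ζ * v‖ ≤ ‖u‖ + ‖v‖ := by
    simpa [norm_mul, hζ] using norm_sub_le u (ζ * v)
  nlinarith [norm_nonneg (u - ζ * v)]

lemma mul_abs_sq_sub_sq_le (c u v : ℝ) :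
    c * |u ^ 2 - v ^ 2| ≤ c ^ 2 * (u - v) ^ 2 + (u ^ 2 + v ^ 2) / 2 := by
  have hfac : |u ^ 2 - v ^ 2| = |u - v| * |u + v| := by rw [← abs_mul]; ring_nf
  have hc : c * |u ^ 2 - v ^ 2| ≤ |c| * |u ^ 2 - v ^ 2| :=
    mul_le_mul_of_nonneg_right (le_abs_self c) (abs_nonneg _)
  have hA : (|c| * |u - v|) ^ 2 = c ^ 2 * (u - v) ^ 2 := by rw [mul_pow, sq_abs, sq_abs]
  rw [hfac] at hc ⊢
  nlinarith [sq_nonneg (2 * (|c| * |u - v|) - |u + v|), sq_abs (u + v), sq_nonneg (u - v)]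

section

omit [DecidableEq V] [DecidableRel G.Adj] [G.LocallyFinite]

variable {G}

lemma SupportNbhdSubset.mono {M N : Type*} [Zero M] [Zero N] {f : V → M} {g : V → N}
    {S : Finset V} (hf : SupportNbhdSubset G f S) (hgf : ∀ x, g x ≠ 0 → f x ≠ 0) :
    SupportNbhdSubset G g S :=
  fun x hx => hf x (hgf x hx)

lemma SupportNbhdSubset.eq_zero_of_notMem {M : Type*} [Zero M] {f : V → M} {S : Finset V}
    (hS : SupportNbhdSubset G f S) {x : V} (hx : x ∉ S) : f x = 0 := by
  by_contra h
  exact hx (hS x h).1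

lemma SupportNbhdSubset.mem_of_adj {M : Type*} [Zero M] {f : V → M} {S : Finset V}
    (hS : SupportNbhdSubset G f S) {x y : V} (hxy : G.Adj x y) (h : f x ≠ 0 ∨ f y ≠ 0) :
    x ∈ S ∧ y ∈ S := by
  rcases h with h | h
  · exact ⟨(hS x h).1, (hS x h).2 y hxy⟩
  · exact ⟨(hS y h).2 x hxy.symm, (hS y h).1⟩

lemma tsum_mul_sq_norm_eq_sum {w : V → ℝ} {f : V → ℂ} {S : Finset V}
    (hS : ∀ x ∉ S, f x = 0) :
    ∑' x, w x * ‖f x‖ ^ 2 = ∑ x ∈ S, w x * ‖f x‖ ^ 2 :=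
  tsum_eq_sum fun x hx => by simp [hS x hx]

lemma qPot_eq_sum {w : V → ℝ} {f : V → ℂ} {S : Finset V} (hS : ∀ x ∉ S, f x = 0) :
    qPot w f = ∑ x ∈ S, w x * ‖f x‖ ^ 2 :=
  tsum_mul_sq_norm_eq_sum hS

lemma qNormSq_eq_sum {f : V → ℂ} {S : Finset V} (hS : ∀ x ∉ S, f x = 0) :
    qNormSq f = ∑ x ∈ S, ‖f x‖ ^ 2 :=
  tsum_eq_sum fun x hx => by simp [hS x hx]

lemma qPot_eq_qPot_sub_qPot {q : V → ℝ} {f : V → ℂ} (hf : (Function.support f).Finite) :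
    qPot q f = qPot (fun x => max (q x) 0) f - qPot (fun x => max (-q x) 0) f := by
  have hS : ∀ x ∉ hf.toFinset, f x = 0 := fun x hx => by simpa using hx
  simp only [qPot_eq_sum hS, ← sum_sub_distrib, ← sub_mul, max_zero_sub_eq_self]

lemma qPot_nonneg {w : V → ℝ} (hw : ∀ x, 0 ≤ w x) (f : V → ℂ) : 0 ≤ qPot w f :=
  tsum_nonneg fun x => mul_nonneg (hw x) (sq_nonneg _)

lemma qNormSq_nonneg (f : V → ℂ) : 0 ≤ qNormSq f :=
  tsum_nonneg fun _ => sq_nonneg _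

end

section

omit [DecidableEq V] [G.LocallyFinite]

variable {G}

lemma sum_adjPairs_swap {M : Type*} [AddCommMonoid M] (S : Finset V) (φ : V → V → M) :
    ∑ p ∈ adjPairs G S, φ p.2 p.1 = ∑ p ∈ adjPairs G S, φ p.1 p.2 := by
  refine sum_nbij' Prod.swap Prod.swap ?_ ?_ (fun _ _ => rfl) (fun _ _ => rfl) (fun _ _ => rfl) <;>
  · intro p hp
    simp only [adjPairs, mem_filter, mem_product] at hp ⊢
    exact ⟨hp.1.symm, hp.2.symm⟩

lemma tsum_tsum_adj_eq_sum_adjPairs {S : Finset V} (φ : V → V → ℝ)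
    (hφ : ∀ x y, G.Adj x y → φ x y ≠ 0 → x ∈ S ∧ y ∈ S) :
    ∑' x, ∑' y, (if G.Adj x y then φ x y else 0) = ∑ p ∈ adjPairs G S, φ p.1 p.2 := by
  have hinner : ∀ x, ∑' y, (if G.Adj x y then φ x y else 0) =
      ∑ y ∈ S, if G.Adj x y then φ x y else 0 := fun x =>
    tsum_eq_sum fun y hy => by
      split_ifs with hxy
      · by_contra h
        exact hy (hφ x y hxy h).2
      · rfl
  rw [tsum_congr hinner, adjPairs, sum_filter, sum_product]
  refine tsum_eq_sum fun x hx => sum_eq_zero fun y _ => ?_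
  split_ifs with hxy
  · by_contra h
    exact hx (hφ x y hxy h).1
  · rfl

lemma qMag_eq_sum (θ : V → V → ℝ) {f : V → ℂ} {S : Finset V} (hS : SupportNbhdSubset G f S) :
    qMag G θ f =
      1 / 2 * ∑ p ∈ adjPairs G S, ‖f p.1 - Complex.exp (Complex.I * θ p.1 p.2) * f p.2‖ ^ 2 := by
  rw [qMag, tsum_tsum_adj_eq_sum_adjPairs]
  intro x y hxy h
  refine hS.mem_of_adj hxy (not_and_or.mp fun h0 => h ?_)
  simp [h0.1, h0.2]

lemma qLap_norm_eq_sum {f : V → ℂ} {S : Finset V} (hS : SupportNbhdSubset G f S) :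
    qLap G (fun x => (‖f x‖ : ℂ)) = 1 / 2 * ∑ p ∈ adjPairs G S, (‖f p.1‖ - ‖f p.2‖) ^ 2 := by
  have hterm : ∀ x y, ‖(‖f x‖ : ℂ) - ‖f y‖‖ ^ 2 = (‖f x‖ - ‖f y‖) ^ 2 := fun x y => by
    rw [← Complex.ofReal_sub, Complex.norm_real, Real.norm_eq_abs, sq_abs]
  simp only [qLap, hterm]
  rw [tsum_tsum_adj_eq_sum_adjPairs]
  intro x y hxy h
  refine hS.mem_of_adj hxy (not_and_or.mp fun h0 => h ?_)
  simp [h0.1, h0.2]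

lemma qLap_nonneg (f : V → ℂ) : 0 ≤ qLap G f := by
  unfold qLap
  positivity

end

section

variable {G}

omit [DecidableRel G.Adj] in
lemma exists_supportNbhdSubset {M : Type*} [Zero M] {f : V → M}
    (hf : (Function.support f).Finite) : ∃ S, SupportNbhdSubset G f S := by
  refine ⟨hf.toFinset ∪ hf.toFinset.biUnion fun x => G.neighborFinset x,
    fun x hx => ⟨?_, fun y hxy => ?_⟩⟩
  · exact mem_union_left _ (hf.mem_toFinset.mpr hx)
  · exact mem_union_right _ (mem_biUnion.mpr ⟨x, hf.mem_toFinset.mpr hx, by simpa using hxy⟩)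

omit [DecidableEq V] [DecidableRel G.Adj] in
lemma qDeg_eq_sum {f : V → ℂ} {S : Finset V} (hS : ∀ x ∉ S, f x = 0) :
    qDeg G f = ∑ x ∈ S, (G.degree x : ℝ) * ‖f x‖ ^ 2 :=
  tsum_mul_sq_norm_eq_sum hS

lemma sum_adjPairs_eq_sum_neighborFinset {M : Type*} [AddCommMonoid M] (S : Finset V)
    (φ : V → V → M) (hφ : ∀ x ∈ S, ∀ y, G.Adj x y → y ∉ S → φ x y = 0) :
    ∑ p ∈ adjPairs G S, φ p.1 p.2 = ∑ x ∈ S, ∑ y ∈ G.neighborFinset x, φ x y := by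
  rw [adjPairs, sum_filter, sum_product]
  refine sum_congr rfl fun x hx => ?_
  rw [← sum_filter]
  refine sum_subset (fun y hy => by simp_all) fun y hy hyS => ?_
  simp only [SimpleGraph.mem_neighborFinset, mem_filter, not_and] at hy hyS
  by_cases hyS' : y ∈ S
  · exact absurd hy (hyS hyS')
  · exact hφ x hx y hy hyS'

lemma sum_adjPairs_fst {w : V → ℝ} {S : Finset V} (hw : SupportNbhdSubset G w S) :
    ∑ p ∈ adjPairs G S, w p.1 = ∑ x ∈ S, (G.degree x : ℝ) * w x := by
  rw [sum_adjPairs_eq_sum_neighborFinset S (fun x _ => w x)]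
  · simp [SimpleGraph.card_neighborFinset_eq_degree]
  · intro x _ y hxy hy
    by_contra h
    exact hy ((hw x h).2 y hxy)

lemma sum_adjPairs_snd {w : V → ℝ} {S : Finset V} (hw : SupportNbhdSubset G w S) :
    ∑ p ∈ adjPairs G S, w p.2 = ∑ x ∈ S, (G.degree x : ℝ) * w x :=
  (sum_adjPairs_swap S fun x _ => w x).trans (sum_adjPairs_fst hw)

lemma sum_adjPairs_indicator_abs {S W : Finset V}
    (hW : SupportNbhdSubset G (fun x => if x ∈ W then (1 : ℝ) else 0) S) :
    ∑ p ∈ adjPairs G S,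
      |(if p.1 ∈ W then (1 : ℝ) else 0) - if p.2 ∈ W then 1 else 0| = 2 * bdryCard G W := by
  set φ : V → V → ℝ := fun x y => if x ∈ W ∧ y ∉ W then 1 else 0
  have hWS : W ⊆ S := fun x hx => (hW x (by simp [hx])).1
  have hsplit : ∀ x y,
      |(if x ∈ W then (1 : ℝ) else 0) - if y ∈ W then 1 else 0| = φ x y + φ y x := by
    intro x y
    by_cases hx : x ∈ W <;> by_cases hy : y ∈ W <;> simp [φ, hx, hy]
  have hout : ∑ p ∈ adjPairs G S, φ p.1 p.2 = bdryCard G W := by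
    rw [sum_adjPairs_eq_sum_neighborFinset S φ, bdryCard, Nat.cast_sum,
      ← sum_subset hWS fun x _ hx => sum_eq_zero fun y _ => by simp [φ, hx]]
    · refine sum_congr rfl fun x hx => ?_
      simp only [φ, hx, true_and]
      rw [sum_boole]
    · intro x _ y hxy hyS
      have : x ∉ W := fun hx => hyS ((hW x (by simp [hx])).2 y hxy)
      simp [φ, this]
  simp only [hsplit, sum_add_distrib, sum_adjPairs_swap S φ, hout]
  ring

lemma qLap_norm_le_qMag (θ : V → V → ℝ) {f : V → ℂ} (hf : (Function.support f).Finite) :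
    qLap G (fun x => (‖f x‖ : ℂ)) ≤ qMag G θ f := by
  obtain ⟨S, hS⟩ := exists_supportNbhdSubset (G := G) hf
  rw [qLap_norm_eq_sum hS, qMag_eq_sum θ hS]
  exact mul_le_mul_of_nonneg_left
    (sum_le_sum fun p _ => sq_norm_sub_norm_le_sq_norm_sub_mul (norm_exp_I_mul_ofReal _))
    (by norm_num)

lemma qMag_add_qLap_norm_le (θ : V → V → ℝ) {f : V → ℂ} (hf : (Function.support f).Finite) :
    qMag G θ f + qLap G (fun x => (‖f x‖ : ℂ)) ≤ 2 * qDeg G f := by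
  obtain ⟨S, hS⟩ := exists_supportNbhdSubset (G := G) hf
  have hw : SupportNbhdSubset G (fun x => ‖f x‖ ^ 2) S := hS.mono fun x hx => by simpa using hx
  rw [qLap_norm_eq_sum hS, qMag_eq_sum θ hS, qDeg_eq_sum fun _ => hS.eq_zero_of_notMem,
    ← mul_add, ← sum_add_distrib]
  calc 1 / 2 * ∑ p ∈ adjPairs G S, (‖f p.1 - Complex.exp (Complex.I * θ p.1 p.2) * f p.2‖ ^ 2
          + (‖f p.1‖ - ‖f p.2‖) ^ 2)
      ≤ 1 / 2 * ∑ p ∈ adjPairs G S, 2 * (‖f p.1‖ ^ 2 + ‖f p.2‖ ^ 2) := by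
        gcongr with p
        exact sq_norm_sub_mul_add_le (norm_exp_I_mul_ofReal _)
    _ = 2 * ∑ x ∈ S, (G.degree x : ℝ) * ‖f x‖ ^ 2 := by
        rw [← mul_sum, sum_add_distrib, sum_adjPairs_fst hw, sum_adjPairs_snd hw]
        ring

end

lemma sum_degree_eq_edgesTwice_add_bdryCard (W : Finset V) :
    ∑ x ∈ W, G.degree x = edgesTwice G W + bdryCard G W := by
  have hin : edgesTwice G W = ∑ x ∈ W, ((G.neighborFinset x).filter (· ∈ W)).card := by
    rw [edgesTwice, card_filter, sum_product]
    refine sum_congr rfl fun x _ => ?_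
    rw [← card_filter]
    congr 1
    ext y
    simp [and_comm]
  rw [hin, bdryCard, ← sum_add_distrib]
  exact sum_congr rfl fun x _ => by rw [card_filter_add_card_filter_not, SimpleGraph.degree]

section Sparse

variable (q : V → ℝ) (a k : ℝ)

/-- For the indicator of `W`, nonnegativity of the defect is the sparseness inequality for `W`;
for general `g ≥ 0` it is the co-area form of sparseness. -/
def sparseDefect (S : Finset V) (g : V → ℝ) : ℝ :=
  k * ∑ x ∈ S, g x + (a + 1) * (1 / 2 * ∑ p ∈ adjPairs G S, |g p.1 - g p.2|)
    + a * ∑ x ∈ S, max (q x) 0 * g x - ∑ x ∈ S, (G.degree x : ℝ) * g x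

variable {G q a k}

lemma sparseDefect_indicator_nonneg (hsp : IsSparse G q a k) {S W : Finset V}
    (hW : SupportNbhdSubset G (fun x => if x ∈ W then (1 : ℝ) else 0) S) :
    0 ≤ sparseDefect G q a k S fun x => if x ∈ W then 1 else 0 := by
  have hWS : W ⊆ S := fun x hx => (hW x (by simp [hx])).1
  have hsum : ∀ w : V → ℝ, ∑ x ∈ S, w x * (if x ∈ W then 1 else 0) = ∑ x ∈ W, w x := fun w => by
    simp only [mul_ite, mul_one, mul_zero, sum_ite_mem, inter_eq_right.mpr hWS]
  have hcard := hsum fun _ => 1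
  have hdeg : ∑ x ∈ W, (G.degree x : ℝ) = edgesTwice G W + bdryCard G W := by
    exact_mod_cast sum_degree_eq_edgesTwice_add_bdryCard G W
  simp only [one_mul, sum_const, nsmul_eq_mul, mul_one] at hcard
  rw [sparseDefect, sum_adjPairs_indicator_abs hW, hsum, hsum, hcard, hdeg]
  linarith [hsp W]

lemma sparseDefect_add {S W : Finset V} {g g' : V → ℝ} {m : ℝ}
    (hg : ∀ x, g x = g' x + m * if x ∈ W then 1 else 0)
    (habs : ∀ x y, |g x - g y| =
      |g' x - g' y| + m * |(if x ∈ W then (1 : ℝ) else 0) - if y ∈ W then 1 else 0|) :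
    sparseDefect G q a k S g =
      sparseDefect G q a k S g' + m * sparseDefect G q a k S fun x => if x ∈ W then 1 else 0 := by
  have hlin : ∀ w : V → ℝ, ∑ x ∈ S, w x * g x =
      ∑ x ∈ S, w x * g' x + m * ∑ x ∈ S, w x * if x ∈ W then 1 else 0 := fun w => by
    rw [mul_sum, ← sum_add_distrib]
    exact sum_congr rfl fun x _ => by rw [hg]; ring
  have hsum := hlin 1
  simp only [Pi.one_apply, one_mul] at hsum
  have hbdry : ∑ p ∈ adjPairs G S, |g p.1 - g p.2| = ∑ p ∈ adjPairs G S, |g' p.1 - g' p.2|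
      + m * ∑ p ∈ adjPairs G S,
        |(if p.1 ∈ W then (1 : ℝ) else 0) - if p.2 ∈ W then 1 else 0| := by
    rw [mul_sum, ← sum_add_distrib]
    exact sum_congr rfl fun p _ => habs _ _
  simp only [sparseDefect, hsum, hlin, hbdry]
  ring

lemma abs_sub_eq_abs_sub_peel_add {U : Finset V} {g : V → ℝ} {m : ℝ} (hm : 0 ≤ m)
    (hgU : ∀ x ∉ U, g x = 0) (hmin : ∀ x ∈ U, m ≤ g x) (x y : V) :
    |g x - g y| = |(if x ∈ U then g x - m else 0) - if y ∈ U then g y - m else 0|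
      + m * |(if x ∈ U then (1 : ℝ) else 0) - if y ∈ U then 1 else 0| := by
  by_cases hx : x ∈ U <;> by_cases hy : y ∈ U
  · simp [hx, hy]
  · have := hmin x hx
    simp [hx, hy, hgU y hy, abs_of_nonneg (hm.trans this), abs_of_nonneg (sub_nonneg.mpr this)]
  · have := hmin y hy
    simp [hx, hy, hgU x hx, abs_of_nonneg (hm.trans this), abs_of_nonpos (sub_nonpos.mpr this)]
  · simp [hx, hy, hgU x hx, hgU y hy]

/-- Co-area argument: peeling off the lowest level set `U` of `g` writes `g` as
`g' + m • 1_U` with `g'` supported on fewer vertices, and the defect is additive under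
this decomposition. -/
lemma sparseDefect_nonneg (hsp : IsSparse G q a k) {S : Finset V} {g : V → ℝ}
    (hg0 : ∀ x, 0 ≤ g x) (hgS : SupportNbhdSubset G g S) : 0 ≤ sparseDefect G q a k S g := by
  suffices h : ∀ W : Finset V, ∀ g : V → ℝ, (∀ x, 0 ≤ g x) → SupportNbhdSubset G g S →
      (∀ x, g x ≠ 0 → x ∈ W) → 0 ≤ sparseDefect G q a k S g from
    h S g hg0 hgS fun x hx => (hgS x hx).1
  intro W
  induction W using Finset.strongInduction with
  | H W ih =>
  intro g hg0 hgS hgW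
  set U := W.filter (g · ≠ 0)
  have hgU : ∀ x, x ∉ U → g x = 0 := fun x hx => by
    by_contra h
    exact hx (mem_filter.mpr ⟨hgW x h, h⟩)
  rcases U.eq_empty_or_nonempty with hU | hU
  · have hg : g = fun _ => 0 := funext fun x => hgU x (by simp [hU])
    simp [hg, sparseDefect]
  obtain ⟨x₀, hx₀, hmin⟩ := U.exists_min_image g hU
  set m := g x₀
  have hm : 0 < m := lt_of_le_of_ne (hg0 x₀) (mem_filter.mp hx₀).2.symm
  set g' : V → ℝ := fun x => if x ∈ U then g x - m else 0
  have hdecomp : ∀ x, g x = g' x + m * if x ∈ U then 1 else 0 := fun x => by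
    by_cases hx : x ∈ U
    · simp [g', hx]
    · simp [g', hx, hgU x hx]
  have hg'g : ∀ x, g' x ≠ 0 → g x ≠ 0 := fun x hx h => by
    have hxU : x ∉ U := fun hxU => (mem_filter.mp hxU).2 h
    simp [g', hxU] at hx
  have hg'0 : ∀ x, 0 ≤ g' x := fun x => by
    by_cases hx : x ∈ U
    · simpa [g', hx] using hmin x hx
    · simp [g', hx]
  have hg'W : ∀ x, g' x ≠ 0 → x ∈ W.erase x₀ := fun x hx =>
    mem_erase.mpr ⟨fun h => hx (by simp [g', h, m]), hgW x (hg'g x hx)⟩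
  have hUS : SupportNbhdSubset G (fun x => if x ∈ U then (1 : ℝ) else 0) S :=
    hgS.mono fun x hx => (mem_filter.mp (show x ∈ U by simpa using hx)).2
  rw [sparseDefect_add hdecomp (abs_sub_eq_abs_sub_peel_add hm.le hgU hmin)]
  exact add_nonneg (ih _ (erase_ssubset (mem_filter.mp hx₀).1) g' hg'0 (hgS.mono hg'g) hg'W)
    (mul_nonneg hm.le (sparseDefect_indicator_nonneg hsp hUS))

lemma qDeg_le_of_isSparse (hsp : IsSparse G q a k) {f : V → ℂ}
    (hf : (Function.support f).Finite) :
    qDeg G f ≤ 2 * k * qNormSq f + 2 * (a + 1) ^ 2 *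
      (qLap G (fun x => (‖f x‖ : ℂ)) + qPot (fun x => max (q x) 0) f) := by
  obtain ⟨S, hS⟩ := exists_supportNbhdSubset (G := G) hf
  have hS0 : ∀ x ∉ S, f x = 0 := fun _ => hS.eq_zero_of_notMem
  have hw : SupportNbhdSubset G (fun x => ‖f x‖ ^ 2) S := hS.mono fun x hx => by simpa using hx
  have hdefect := sparseDefect_nonneg hsp (fun x => sq_nonneg ‖f x‖) hw
  have hbdry : (a + 1) * ∑ p ∈ adjPairs G S, |‖f p.1‖ ^ 2 - ‖f p.2‖ ^ 2| ≤
      (a + 1) ^ 2 * ∑ p ∈ adjPairs G S, (‖f p.1‖ - ‖f p.2‖) ^ 2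
        + ∑ x ∈ S, (G.degree x : ℝ) * ‖f x‖ ^ 2 :=
    calc (a + 1) * ∑ p ∈ adjPairs G S, |‖f p.1‖ ^ 2 - ‖f p.2‖ ^ 2|
        ≤ ∑ p ∈ adjPairs G S, ((a + 1) ^ 2 * (‖f p.1‖ - ‖f p.2‖) ^ 2
            + (‖f p.1‖ ^ 2 + ‖f p.2‖ ^ 2) / 2) := by
          rw [mul_sum]
          exact sum_le_sum fun p _ => mul_abs_sq_sub_sq_le _ _ _
      _ = _ := by
          rw [sum_add_distrib, ← mul_sum, ← sum_div, sum_add_distrib, sum_adjPairs_fst hw,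
            sum_adjPairs_snd hw]
          ring
  have hP := qPot_nonneg (fun x => le_max_right (q x) 0) f
  have haP : a * qPot (fun x => max (q x) 0) f ≤ (a + 1) ^ 2 * qPot (fun x => max (q x) 0) f :=
    mul_le_mul_of_nonneg_right (by nlinarith [sq_nonneg (a + 1 / 2)]) hP
  rw [qPot_eq_sum hS0] at hP haP
  rw [qDeg_eq_sum hS0, qNormSq_eq_sum hS0, qLap_norm_eq_sum hS, qPot_eq_sum hS0]
  unfold sparseDefect at hdefect
  linarith

end Sparse

lemma two_sided_bound_of_estimates {D P N n T L M k C ε : ℝ} (hM : 0 ≤ M)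
    (hε : ε * (3 * M + 2) = 1) (hk : 0 ≤ k) (hn : 0 ≤ n) (hL : 0 ≤ L) (hP : 0 ≤ P)
    (hN : 0 ≤ N) (hD : D ≤ 2 * k * n + M * (L + P)) (hLT : L ≤ T) (hTL : T + L ≤ 2 * D)
    (hNT : N ≤ ε * (T + P) + C * n) :
    ε * (D + (P - N)) - (C + 3 * k) * n ≤ T + (P - N) ∧
      T + (P - N) ≤ (2 - ε) * (D + (P - N)) + (C + 3 * k) * n := by
  have hε0 : 0 < ε := pos_of_mul_pos_left (by rw [hε]; exact one_pos) (by positivity)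
  have hε2 : ε ≤ 1 / 2 := by nlinarith
  have hεD := mul_le_mul_of_nonneg_left hD hε0.le
  have hεk := mul_le_mul_of_nonneg_right hε2 (mul_nonneg hk hn)
  constructor
  · nlinarith [mul_nonneg hε0.le hN, mul_nonneg (mul_nonneg hε0.le hM) (sub_nonneg.mpr hLT)]
  · nlinarith [mul_nonneg hε0.le hN, mul_nonneg hε0.le hL]

theorem stmt12 (θ : V → V → ℝ) (q : V → ℝ)
    (hq : ∀ α : ℝ, 0 < α → α < 1 → KClassTheta G θ q α)
    (a k : ℝ) (hk : 0 ≤ k) (hsparse : IsSparse G q a k) :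
    ∃ ta tk : ℝ, 0 < ta ∧ ta < 1 ∧ 0 ≤ tk ∧
      ∀ f : V → ℂ, (Function.support f).Finite →
        (1 - ta) * (qDeg G f + qPot q f) - tk * qNormSq f ≤ qMag G θ f + qPot q f ∧
        qMag G θ f + qPot q f ≤ (1 + ta) * (qDeg G f + qPot q f) + tk * qNormSq f := by
  set M := 2 * (a + 1) ^ 2
  set ε := (3 * M + 2)⁻¹
  have hM : 0 ≤ M := by positivity
  have hε : ε * (3 * M + 2) = 1 := inv_mul_cancel₀ (by positivity)
  have hε0 : 0 < ε := by positivity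
  have hε1 : ε < 1 := inv_lt_one_of_one_lt₀ (by linarith)
  obtain ⟨C, hC0, hC⟩ := hq ε hε0 hε1
  refine ⟨1 - ε, C + 3 * k, by linarith, by linarith, by positivity, fun f hf => ?_⟩
  have h := two_sided_bound_of_estimates hM hε hk (qNormSq_nonneg f) (qLap_nonneg _)
    (qPot_nonneg (fun x => le_max_right (q x) 0) f) (qPot_nonneg (fun x => le_max_right (-q x) 0) f)
    (qDeg_le_of_isSparse hsparse hf) (qLap_norm_le_qMag θ hf) (qMag_add_qLap_norm_le θ hf)
    (hC f hf)
  rw [qPot_eq_qPot_sub_qPot hf]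
  exact ⟨by linear_combination h.1, by linear_combination h.2⟩

end
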